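/- arXiv:2601.13900 — 2 statements merged into one kernel-verified Lean document; each statement's English description precedes it below -/
import Mathlib

section
/- Let n > k ≥ ⌊n/2⌋ and let D_{n,k} be the n×n circulant 0,1 matrix whose first row consists of n−k ones followed by k zeros. Then the n diagonal entries of D_{n,k} (which equal 1) form an isolation set of size n, and consequently the Boolean rank and binary rank of D_{n,k} both equal n. -/
open Function Set

section Defs

variable {α β : Type*}

/-- A `0,1` matrix with integer entries. -/
def ZeroOne (M : Matrix α β ℤ) : Prop := ∀ i j, M i j = 0 ∨ M i j = 1

/-- A monochromatic all-ones combinatorial rectangle of `M`. -/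
def IsOnesRect (M : Matrix α β ℤ) (S : Set (α × β)) : Prop :=
  (∃ (R : Set α) (C : Set β), S = R ×ˢ C) ∧ ∀ p ∈ S, M p.1 p.2 = 1

/-- The set of `1`-entries of `M`. -/
def onesOf (M : Matrix α β ℤ) : Set (α × β) := {p | M p.1 p.2 = 1}

/-- Minimum number of monochromatic all-ones rectangles covering the ones of `M`. -/
noncomputable def coverNum (M : Matrix α β ℤ) : ℕ :=
  sInf {k | ∃ f : Fin k → Set (α × β), (∀ t, IsOnesRect M (f t)) ∧ (⋃ t, f t) = onesOf M}

/-- Minimum number of pairwise disjoint monochromatic all-ones rectangles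
partitioning the ones of `M`. -/
noncomputable def partitionNum (M : Matrix α β ℤ) : ℕ :=
  sInf {k | ∃ f : Fin k → Set (α × β), (∀ t, IsOnesRect M (f t)) ∧
    (Pairwise fun s t => Disjoint (f s) (f t)) ∧ (⋃ t, f t) = onesOf M}

end Defs

/-- An isolation set in a `0,1` matrix `M`: a set of `1`-entries, no two sharing a
row or a column, and no two lying in a common all-ones `2 × 2` submatrix. -/
def IsIsolationSet {α β : Type*} (M : Matrix α β ℤ) (F : Set (α × β)) : Prop :=
  (∀ p ∈ F, M p.1 p.2 = 1) ∧
  ∀ p ∈ F, ∀ q ∈ F, p ≠ q →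
    p.1 ≠ q.1 ∧ p.2 ≠ q.2 ∧ ¬(M p.1 q.2 = 1 ∧ M q.1 p.2 = 1)

/-- The circulant matrix `D_{n,k}`: its `(i,j)` entry is `1` iff
`(j - i) mod n ∈ {0, 1, ..., n - k - 1}`. -/
def Dmat (n k : ℕ) : Matrix (Fin n) (Fin n) ℤ :=
  fun i j => if (j.val + n - i.val) % n < n - k then 1 else 0

/-!
Any cover of the ones of a `0,1` matrix by all-ones rectangles needs a separate rectangle for
each entry of an isolation set, while the rows always give a partition into as many rectangles
as there are rows. For `D_{n,k}` the diagonal is an isolation set: for `i ≠ j` the offsets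
`(j - i) mod n` and `(i - j) mod n` add up to `n`, so they cannot both be below
`n - k ≤ ⌈n/2⌉`, i.e. the entries `(i, j)` and `(j, i)` are never both `1`.
-/

section Rectangles

variable {α β : Type*} {M : Matrix α β ℤ}

theorem IsIsolationSet.ncard_le_of_cover {F : Set (α × β)} (hF : IsIsolationSet M F) {m : ℕ}
    {f : Fin m → Set (α × β)} (hrect : ∀ t, IsOnesRect M (f t)) (hcov : (⋃ t, f t) = onesOf M) :
    F.ncard ≤ m := by
  have hmem : ∀ p ∈ F, ∃ t, p ∈ f t := fun p hp =>
    mem_iUnion.1 (hcov ▸ hF.1 p hp : p ∈ ⋃ t, f t)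
  obtain rfl | ⟨p₀, hp₀⟩ := F.eq_empty_or_nonempty
  · simp
  have : Nonempty (Fin m) := ⟨(hmem p₀ hp₀).choose⟩
  choose! g hg using hmem
  -- Two isolated entries in one rectangle would span an all-ones `2 × 2` submatrix.
  have hinj : InjOn g F := by
    intro p hp q hq hpq
    by_contra hne
    obtain ⟨⟨R, C, hRC⟩, hones⟩ := hrect (g p)
    have hp' := hg p hp
    have hq' := hg q hq
    rw [← hpq] at hq'
    rw [hRC] at hp' hq' hones
    exact (hF.2 p hp q hq hne).2.2
      ⟨hones (p.1, q.2) ⟨hp'.1, hq'.2⟩, hones (q.1, p.2) ⟨hq'.1, hp'.2⟩⟩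
  calc F.ncard ≤ (univ : Set (Fin m)).ncard :=
        ncard_le_ncard_of_injOn g (fun p _ => mem_univ _) hinj
    _ = m := by rw [ncard_univ, Nat.card_fin]

variable [Fintype α]

theorem exists_rowPartition (M : Matrix α β ℤ) :
    ∃ f : Fin (Fintype.card α) → Set (α × β), (∀ t, IsOnesRect M (f t)) ∧
      (Pairwise fun s t => Disjoint (f s) (f t)) ∧ (⋃ t, f t) = onesOf M := by
  let e := (Fintype.equivFin α).symm
  refine ⟨fun t => {e t} ×ˢ {j | M (e t) j = 1}, fun t => ⟨⟨_, _, rfl⟩, ?_⟩, ?_, ?_⟩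
  · rintro ⟨i, j⟩ ⟨rfl, hj⟩
    exact hj
  · intro s t hst
    refine disjoint_left.2 fun p hs ht => hst (e.injective ?_)
    exact (mem_singleton_iff.1 hs.1).symm.trans (mem_singleton_iff.1 ht.1)
  · ext ⟨i, j⟩
    simp only [mem_iUnion, mem_prod, mem_singleton_iff, mem_ofPred_eq, onesOf]
    exact ⟨fun ⟨t, hi, hj⟩ => hi ▸ hj, fun hj => ⟨e.symm i, by simp, by simpa using hj⟩⟩

theorem partitionNum_le_card (M : Matrix α β ℤ) : partitionNum M ≤ Fintype.card α :=
  Nat.sInf_le (exists_rowPartition M)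

theorem coverNum_le_partitionNum (M : Matrix α β ℤ) : coverNum M ≤ partitionNum M :=
  csInf_le_csInf (OrderBot.bddBelow _) ⟨_, exists_rowPartition M⟩
    fun _ ⟨f, hrect, _, hcov⟩ => ⟨f, hrect, hcov⟩

theorem IsIsolationSet.ncard_le_coverNum {F : Set (α × β)} (hF : IsIsolationSet M F) :
    F.ncard ≤ coverNum M := by
  obtain ⟨f, hrect, -, hcov⟩ := exists_rowPartition M
  exact le_csInf ⟨_, f, hrect, hcov⟩ fun _ ⟨g, hgrect, hgcov⟩ => hF.ncard_le_of_cover hgrect hgcov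

end Rectangles

theorem add_sub_mod_add_add_sub_mod {n i j : ℕ} (hi : i < n) (hj : j < n) (hij : i ≠ j) :
    (j + n - i) % n + (i + n - j) % n = n := by
  wlog hlt : i < j generalizing i j
  · rw [add_comm]
    exact this hj hi hij.symm (by omega)
  rw [show j + n - i = n + (j - i) by omega, Nat.add_mod_left,
    Nat.mod_eq_of_lt (by omega : j - i < n), Nat.mod_eq_of_lt (by omega : i + n - j < n)]
  omega

theorem Dmat_apply_self {n k : ℕ} (hkn : k < n) (i : Fin n) : Dmat n k i i = 1 := by
  simp only [Dmat, Nat.add_sub_cancel_left, Nat.mod_self]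
  exact if_pos (by omega)

theorem Dmat_isIsolationSet_diag {n k : ℕ} (hkn : k < n) (hk : n / 2 ≤ k) :
    IsIsolationSet (Dmat n k) {p : Fin n × Fin n | p.1 = p.2} := by
  refine ⟨fun p (hp : p.1 = p.2) => hp ▸ Dmat_apply_self hkn p.1, ?_⟩
  rintro ⟨i, _⟩ (rfl : i = _) ⟨j, _⟩ (rfl : j = _) hne
  have hij : i ≠ j := fun h => hne (h ▸ rfl)
  refine ⟨hij, hij, fun ⟨h₁, h₂⟩ => ?_⟩
  have hsum := add_sub_mod_add_add_sub_mod i.isLt j.isLt (Fin.val_ne_of_ne hij)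
  simp only [Dmat] at h₁ h₂
  split_ifs at h₁ h₂ <;> omega

theorem ncard_diag (α : Type*) [Fintype α] :
    {p : α × α | p.1 = p.2}.ncard = Fintype.card α := by
  rw [show {p : α × α | p.1 = p.2} = range fun a => (a, a) by
      ext ⟨a, b⟩; simp [eq_comm],
    ← image_univ, ncard_image_of_injective _ fun a b h => (Prod.mk.inj h).1, ncard_univ,
    Nat.card_eq_fintype_card]

/-- For `n > k ≥ ⌊n/2⌋`, the `n` diagonal entries of `D_{n,k}` form an isolation
set of size `n`, and consequently the Boolean rank and the binary rank of
`D_{n,k}` both equal `n`. -/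
theorem Dmat_diag_isolation (n k : ℕ) (hkn : k < n) (hk : n / 2 ≤ k) :
    IsIsolationSet (Dmat n k) {p : Fin n × Fin n | p.1 = p.2} ∧
    Set.ncard {p : Fin n × Fin n | p.1 = p.2} = n ∧
    coverNum (Dmat n k) = n ∧ partitionNum (Dmat n k) = n := by
  have hiso := Dmat_isIsolationSet_diag hkn hk
  have hcard : Set.ncard {p : Fin n × Fin n | p.1 = p.2} = n := by
    rw [ncard_diag, Fintype.card_fin]
  have hlow := hiso.ncard_le_coverNum
  have hmid := coverNum_le_partitionNum (Dmat n k)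
  have hup := partitionNum_le_card (Dmat n k)
  rw [Fintype.card_fin] at hup
  exact ⟨hiso, hcard, by omega, by omega⟩
end

section
/- Let A and B be 0,1 matrices, and suppose there exist sequences of 0,1 matrices M_1,...,M_s and N_1,...,N_s such that the Boolean sum of M_1,...,M_s equals A, and for every (i,j) with A_{i,j}=1, the Boolean sum of the matrices N_t over those t with (M_t)_{i,j}=1 equals B. Then Rbool(A⊗B) ≤ Σ_{t=1}^{s} Rbool(M_t)·Rbool(N_t). -/
/-!
The hypotheses say exactly that the ones of `A ⊗ B` are the union over `t` of the ones of
`Ms t ⊗ Ns t`. Taking optimal rectangle covers of `Ms t` and of `Ns t`, the Kronecker products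
of a rectangle of the first with one of the second are again rectangles, and they cover the
ones of `Ms t ⊗ Ns t`.
-/

open Function Set

section Cover

variable {α β : Type*} {M : Matrix α β ℤ}

theorem exists_cover_fin_of_cover {ι : Type*} [Finite ι] (f : ι → Set (α × β))
    (hf : ∀ i, ∃ (R : Set α) (C : Set β), f i = R ×ˢ C) (hU : ⋃ i, f i = onesOf M) :
    ∃ g : Fin (Nat.card ι) → Set (α × β), (∀ t, IsOnesRect M (g t)) ∧ ⋃ t, g t = onesOf M := by
  let e := Finite.equivFin ι
  refine ⟨fun t => f (e.symm t), fun t => ⟨hf _, fun x hx => ?_⟩,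
    by rw [e.symm.surjective.iUnion_comp f, hU]⟩
  exact (hU ▸ mem_iUnion_of_mem _ hx : x ∈ onesOf M)

theorem coverNum_le_of_cover {ι : Type*} [Finite ι] (f : ι → Set (α × β))
    (hf : ∀ i, ∃ (R : Set α) (C : Set β), f i = R ×ˢ C) (hU : ⋃ i, f i = onesOf M) :
    coverNum M ≤ Nat.card ι :=
  Nat.sInf_le (exists_cover_fin_of_cover f hf hU)

theorem exists_cover_coverNum [Finite α] [Finite β] (M : Matrix α β ℤ) :
    ∃ g : Fin (coverNum M) → Set (α × β), (∀ t, IsOnesRect M (g t)) ∧ ⋃ t, g t = onesOf M := by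
  have hU : ⋃ p : onesOf M, {p.1.1} ×ˢ {p.1.2} = onesOf M := by
    simp only [singleton_prod_singleton, Prod.mk.eta, iUnion_of_singleton_coe]
  exact Nat.sInf_mem (s := {k | ∃ g : Fin k → Set (α × β), (∀ t, IsOnesRect M (g t)) ∧
    ⋃ t, g t = onesOf M}) ⟨_, exists_cover_fin_of_cover _ (fun _ => ⟨_, _, rfl⟩) hU⟩

end Cover

section Kronecker

variable {α β γ δ : Type*}

/-- The positions `((i, k), (j, l))` of `M ⊗ₖ N` with `(i, j) ∈ S` and `(k, l) ∈ T`. -/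
def kronSet (S : Set (α × β)) (T : Set (γ × δ)) : Set ((α × γ) × (β × δ)) :=
  {x | (x.1.1, x.2.1) ∈ S ∧ (x.1.2, x.2.2) ∈ T}

theorem kronSet_prod (R : Set α) (C : Set β) (R' : Set γ) (C' : Set δ) :
    kronSet (R ×ˢ C) (R' ×ˢ C') = (R ×ˢ R') ×ˢ (C ×ˢ C') := by
  ext
  simp only [kronSet, mem_ofPred_eq, mem_prod]
  tauto

theorem kronSet_iUnion_iUnion {ι κ : Type*} (S : ι → Set (α × β)) (T : κ → Set (γ × δ)) :
    kronSet (⋃ i, S i) (⋃ j, T j) = ⋃ i, ⋃ j, kronSet (S i) (T j) := by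
  ext
  simp only [kronSet, mem_ofPred_eq, mem_iUnion]
  tauto

open Kronecker in
theorem onesOf_kronecker {A : Matrix α β ℤ} (hA : ZeroOne A) (B : Matrix γ δ ℤ) :
    onesOf (A ⊗ₖ B) = kronSet (onesOf A) (onesOf B) := by
  ext ⟨⟨i, k⟩, ⟨j, l⟩⟩
  simp only [onesOf, kronSet, mem_ofPred_eq, Matrix.kroneckerMap_apply]
  rcases hA i j with h | h <;> simp [h]

open Kronecker in
theorem onesOf_kronecker_eq_iUnion {ι : Type*} {A : Matrix α β ℤ} {B : Matrix γ δ ℤ}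
    (hA : ZeroOne A) (Ms : ι → Matrix α β ℤ) (Ns : ι → Matrix γ δ ℤ)
    (hsum : ∀ i j, A i j = 1 ↔ ∃ t, Ms t i j = 1)
    (hcov : ∀ i j, A i j = 1 → ∀ k l, B k l = 1 ↔ ∃ t, Ms t i j = 1 ∧ Ns t k l = 1) :
    onesOf (A ⊗ₖ B) = ⋃ t, kronSet (onesOf (Ms t)) (onesOf (Ns t)) := by
  rw [onesOf_kronecker hA]
  ext ⟨⟨i, k⟩, ⟨j, l⟩⟩
  simp only [onesOf, kronSet, mem_ofPred_eq, mem_iUnion]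
  constructor
  · rintro ⟨hAij, hBkl⟩
    exact (hcov i j hAij k l).mp hBkl
  · rintro ⟨t, hM, hN⟩
    have hAij : A i j = 1 := (hsum i j).mpr ⟨t, hM⟩
    exact ⟨hAij, (hcov i j hAij k l).mpr ⟨t, hM, hN⟩⟩

end Kronecker

open Kronecker in
theorem boolRank_kronecker_cover_bound_general {n m p q s : ℕ}
    (A : Matrix (Fin n) (Fin m) ℤ) (B : Matrix (Fin p) (Fin q) ℤ)
    (hA : ZeroOne A)
    (Ms : Fin s → Matrix (Fin n) (Fin m) ℤ) (Ns : Fin s → Matrix (Fin p) (Fin q) ℤ)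
    (hsum : ∀ i j, A i j = 1 ↔ ∃ t, Ms t i j = 1)
    (hcov : ∀ i j, A i j = 1 → ∀ k l, B k l = 1 ↔ ∃ t, Ms t i j = 1 ∧ Ns t k l = 1) :
    coverNum (A ⊗ₖ B) ≤ ∑ t, coverNum (Ms t) * coverNum (Ns t) := by
  choose F hF hFU using fun t => exists_cover_coverNum (Ms t)
  choose G hG hGU using fun t => exists_cover_coverNum (Ns t)
  have hrect (w : Σ t, Fin (coverNum (Ms t)) × Fin (coverNum (Ns t))) :
      ∃ R C, kronSet (F w.1 w.2.1) (G w.1 w.2.2) = R ×ˢ C := by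
    obtain ⟨⟨R, C, hRC⟩, -⟩ := hF w.1 w.2.1
    obtain ⟨⟨R', C', hRC'⟩, -⟩ := hG w.1 w.2.2
    exact ⟨_, _, by rw [hRC, hRC', kronSet_prod]⟩
  have hU : ⋃ w : Σ t, Fin (coverNum (Ms t)) × Fin (coverNum (Ns t)),
      kronSet (F w.1 w.2.1) (G w.1 w.2.2) = onesOf (A ⊗ₖ B) := by
    simp only [iUnion_sigma, iUnion_prod', ← kronSet_iUnion_iUnion, hFU, hGU]
    exact (onesOf_kronecker_eq_iUnion hA Ms Ns hsum hcov).symm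
  calc coverNum (A ⊗ₖ B)
      ≤ Nat.card (Σ t, Fin (coverNum (Ms t)) × Fin (coverNum (Ns t))) :=
        coverNum_le_of_cover _ hrect hU
    _ = ∑ t, coverNum (Ms t) * coverNum (Ns t) := by simp

open Kronecker in
/-- Suppose the Boolean sum of `0,1` matrices `Ms 1, ..., Ms s` equals `A`, and for
every `(i,j)` with `A i j = 1`, the Boolean sum of the matrices `Ns t` over those
`t` with `(Ms t) i j = 1` equals `B`. Then
`Rbool(A ⊗ B) ≤ Σ_t Rbool(Ms t) · Rbool(Ns t)`. -/
theorem boolRank_kronecker_cover_bound {n m p q s : ℕ}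
    (A : Matrix (Fin n) (Fin m) ℤ) (B : Matrix (Fin p) (Fin q) ℤ)
    (hA : ZeroOne A) (hB : ZeroOne B)
    (Ms : Fin s → Matrix (Fin n) (Fin m) ℤ) (Ns : Fin s → Matrix (Fin p) (Fin q) ℤ)
    (hMs : ∀ t, ZeroOne (Ms t)) (hNs : ∀ t, ZeroOne (Ns t))
    (hsum : ∀ i j, A i j = 1 ↔ ∃ t, Ms t i j = 1)
    (hcov : ∀ i j, A i j = 1 → ∀ k l, B k l = 1 ↔ ∃ t, Ms t i j = 1 ∧ Ns t k l = 1) :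
    coverNum (A ⊗ₖ B) ≤ ∑ t, coverNum (Ms t) * coverNum (Ns t) :=
  boolRank_kronecker_cover_bound_general A B hA Ms Ns hsum hcov
end
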